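/- arXiv:1211.2973 — 3 statements merged into one kernel-verified Lean document; each statement's English description precedes it below -/
import Mathlib

section
/- Let X_1, X_2, ... be a sequence of nonnegative random variables on Ω, uniformly bounded by M > 0, and let c be a capacity of the form c(A) = sup_{P∈𝔓} P(A) with associated upper expectation Ê[Y] = sup_{P∈𝔓} E^P[Y]. Suppose there exists a sequence of closed sets F_m (in a topology on Ω) such that: (1) c(F_m^c) → 0 as m → ∞; (2) X_n ↓ 0 pointwise on every F_m; (3) X_n restricted to F_m is upper semicontinuous for all m ≤ n. Assume furthermore that for any decreasing sequence of closed sets G_k ↓ ∅ one has c(G_k) ↓ 0. Then Ê[X_n] → 0. -/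
open MeasureTheory Filter Topology

lemma usc_superlevel_closed {Ω : Type*} [TopologicalSpace Ω] {f : Ω → ℝ} {s : Set Ω}
    (hs : IsClosed s) (hf : UpperSemicontinuousOn f s) (c : ℝ) :
    IsClosed (s ∩ {ω | c ≤ f ω}) := by
  refine isClosed_of_closure_subset fun x hx => ?_
  have hxs : x ∈ s := hs.closure_subset (closure_mono Set.inter_subset_left hx)
  refine ⟨hxs, ?_⟩
  by_contra h
  simp only [Set.mem_setOf_eq, not_le] at h
  have hev : ∀ᶠ y in 𝓝[s] x, f y < c := hf x hxs c h
  have hne : (𝓝[s ∩ {ω | c ≤ f ω}] x).NeBot := mem_closure_iff_nhdsWithin_neBot.mp hx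
  have h2 : ∀ᶠ y in 𝓝[s ∩ {ω | c ≤ f ω}] x, f y < c :=
    hev.filter_mono (nhdsWithin_mono x Set.inter_subset_left)
  have h3 : ∀ᶠ y in 𝓝[s ∩ {ω | c ≤ f ω}] x, y ∈ s ∩ {ω | c ≤ f ω} :=
    self_mem_nhdsWithin
  obtain ⟨y, hy1, hy2⟩ := (h2.and h3).exists
  exact absurd hy1 (not_lt.mpr hy2.2)

theorem upper_expectation_tendsto_zero_of_usc
    {Ω : Type*} [TopologicalSpace Ω] [MeasurableSpace Ω] [BorelSpace Ω]
    (𝔓 : Set (Measure Ω)) (h𝔓 : ∀ P ∈ 𝔓, IsProbabilityMeasure P)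
    (X : ℕ → Ω → ℝ) (M : ℝ) (hM : 0 < M)
    (hXmeas : ∀ n, Measurable (X n))
    (hXnonneg : ∀ n ω, 0 ≤ X n ω)
    (hXbdd : ∀ n ω, X n ω ≤ M)
    (F : ℕ → Set Ω) (hFclosed : ∀ m, IsClosed (F m))
    -- (1) c(F_mᶜ) → 0
    (hFcap : Tendsto (fun m => ⨆ P ∈ 𝔓, P (F m)ᶜ) atTop (𝓝 0))
    -- (2) X_n ↓ 0 pointwise on every F_m
    (hXanti : ∀ m, ∀ ω ∈ F m, Antitone (fun n => X n ω))
    (hXlim : ∀ m, ∀ ω ∈ F m, Tendsto (fun n => X n ω) atTop (𝓝 0))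
    -- (3) X_n is upper semicontinuous on F_m for m ≤ n
    (hXusc : ∀ m n : ℕ, m ≤ n → UpperSemicontinuousOn (X n) (F m))
    -- for decreasing sequences of closed sets G_k ↓ ∅, c(G_k) ↓ 0
    (hcap : ∀ G : ℕ → Set Ω, (∀ k, IsClosed (G k)) → Antitone G → (⋂ k, G k) = ∅ →
      Tendsto (fun k => ⨆ P ∈ 𝔓, P (G k)) atTop (𝓝 0)) :
    Tendsto (fun n => ⨆ P ∈ 𝔓, ∫ ω, X n ω ∂P) atTop (𝓝 0) := by
  rw [Metric.tendsto_atTop]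
  intro ε hε
  set δ : ℝ := ε / 6 with hδdef
  have hδ : 0 < δ := by positivity
  have hδM : (0 : ENNReal) < ENNReal.ofReal (δ / M) := by
    rw [ENNReal.ofReal_pos]; positivity
  -- choose m
  obtain ⟨m, hm⟩ := (hFcap.eventually_lt_const hδM).exists
  -- the decreasing sequence G
  set G : ℕ → Set Ω := fun k => F m ∩ {ω | δ ≤ X (m + k) ω} with hGdef
  have hGclosed : ∀ k, IsClosed (G k) := fun k =>
    usc_superlevel_closed (hFclosed m) (hXusc m (m + k) (Nat.le_add_right m k)) δ
  have hGanti : Antitone G := by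
    intro k l hkl ω hω
    exact ⟨hω.1, le_trans hω.2 (hXanti m ω hω.1 (by omega))⟩
  have hGempty : (⋂ k, G k) = ∅ := by
    rw [Set.eq_empty_iff_forall_notMem]
    intro ω hω
    simp only [Set.mem_iInter] at hω
    have hωF : ω ∈ F m := (hω 0).1
    have hlim : Tendsto (fun k => X (m + k) ω) atTop (𝓝 0) :=
      (hXlim m ω hωF).comp (tendsto_atTop_atTop_of_monotone (fun a b h => by omega)
        (fun b => ⟨b, Nat.le_add_left b m⟩))
    obtain ⟨k, hk⟩ := (hlim.eventually_lt_const hδ).exists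
    exact absurd (hω k).2 (not_le.mpr hk)
  obtain ⟨N, hN⟩ := ((hcap G hGclosed hGanti hGempty).eventually_lt_const hδM).exists
  refine ⟨m + N, fun n hn => ?_⟩
  -- the supremum is nonneg
  have hsupnn : 0 ≤ ⨆ P ∈ 𝔓, ∫ ω, X n ω ∂P :=
    Real.iSup_nonneg fun P => Real.iSup_nonneg fun _ =>
      integral_nonneg fun ω => hXnonneg n ω
  rw [Real.dist_eq, sub_zero, abs_of_nonneg hsupnn]
  have key : (⨆ P ∈ 𝔓, ∫ ω, X n ω ∂P) ≤ ε / 2 := by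
    refine Real.iSup_le (fun P => Real.iSup_le (fun hP => ?_) (by positivity)) (by positivity)
    haveI := h𝔓 P hP
    -- measurability
    have hA : MeasurableSet ((F m)ᶜ) := (hFclosed m).measurableSet.compl
    have hB : MeasurableSet (G N) := (hGclosed N).measurableSet
    -- pointwise bound
    have hpt : ∀ ω, X n ω ≤ (F m)ᶜ.indicator (fun _ => M) ω
        + (G N).indicator (fun _ => M) ω + δ := by
      intro ω
      by_cases hωF : ω ∈ F m
      · by_cases hωG : ω ∈ G N
        · have : (G N).indicator (fun _ => M) ω = M := Set.indicator_of_mem hωG _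
          rw [this]
          have h1 : 0 ≤ (F m)ᶜ.indicator (fun _ => M) ω :=
            Set.indicator_nonneg (fun _ _ => hM.le) ω
          linarith [hXbdd n ω]
        · have hlt : X (m + N) ω < δ := by
            by_contra hcon
            exact hωG ⟨hωF, not_lt.mp hcon⟩
          have hmono : X n ω ≤ X (m + N) ω := hXanti m ω hωF hn
          have h1 : 0 ≤ (F m)ᶜ.indicator (fun _ => M) ω :=
            Set.indicator_nonneg (fun _ _ => hM.le) ω
          have h2 : 0 ≤ (G N).indicator (fun _ => M) ω :=
            Set.indicator_nonneg (fun _ _ => hM.le) ω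
          linarith
      · have : (F m)ᶜ.indicator (fun _ => M) ω = M :=
          Set.indicator_of_mem (Set.mem_compl hωF) _
        rw [this]
        have h2 : 0 ≤ (G N).indicator (fun _ => M) ω :=
          Set.indicator_nonneg (fun _ _ => hM.le) ω
        linarith [hXbdd n ω]
    -- integrability of the majorant
    have hintA : Integrable ((F m)ᶜ.indicator (fun _ => M)) P :=
      (integrable_const M).indicator hA
    have hintB : Integrable ((G N).indicator (fun _ => M)) P :=
      (integrable_const M).indicator hB
    have hint : Integrable (fun ω => (F m)ᶜ.indicator (fun _ => M) ω
        + (G N).indicator (fun _ => M) ω + δ) P :=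
      (hintA.add hintB).add (integrable_const δ)
    have hInt : ∫ ω, X n ω ∂P ≤ ∫ ω, ((F m)ᶜ.indicator (fun _ => M) ω
        + (G N).indicator (fun _ => M) ω + δ) ∂P := by
      refine integral_mono_of_nonneg (Filter.Eventually.of_forall (hXnonneg n)) hint
        (Filter.Eventually.of_forall hpt)
    have hPA : (P (F m)ᶜ).toReal < δ / M := by
      have h1 : P (F m)ᶜ ≤ ⨆ P ∈ 𝔓, P (F m)ᶜ := le_biSup (fun Q : Measure Ω => Q (F m)ᶜ) hP
      exact ENNReal.toReal_lt_of_lt_ofReal (lt_of_le_of_lt h1 hm)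
    have hPB : (P (G N)).toReal < δ / M := by
      have h1 : P (G N) ≤ ⨆ P ∈ 𝔓, P (G N) := le_biSup (fun Q : Measure Ω => Q (G N)) hP
      exact ENNReal.toReal_lt_of_lt_ofReal (lt_of_le_of_lt h1 hN)
    have heval : ∫ ω, ((F m)ᶜ.indicator (fun _ => M) ω
        + (G N).indicator (fun _ => M) ω + δ) ∂P
        = (P (F m)ᶜ).toReal * M + (P (G N)).toReal * M + δ := by
      have hintAB : Integrable (fun ω => (F m)ᶜ.indicator (fun _ => M) ω
          + (G N).indicator (fun _ => M) ω) P := hintA.add hintB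
      rw [integral_add hintAB (integrable_const δ),
        integral_add hintA hintB, integral_indicator_const _ hA,
        integral_indicator_const _ hB, integral_const]
      simp [measure_univ, smul_eq_mul, mul_comm, measureReal_def]
    have hmul1 : (P (F m)ᶜ).toReal * M < δ := by
      have := (mul_lt_mul_of_pos_right hPA hM)
      rwa [div_mul_cancel₀ _ hM.ne'] at this
    have hmul2 : (P (G N)).toReal * M < δ := by
      have := (mul_lt_mul_of_pos_right hPB hM)
      rwa [div_mul_cancel₀ _ hM.ne'] at this
    calc ∫ ω, X n ω ∂P ≤ _ := hInt
      _ = (P (F m)ᶜ).toReal * M + (P (G N)).toReal * M + δ := heval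
      _ ≤ ε / 2 := by rw [hδdef] at *; linarith
  linarith
end

section
/- Let x: [0,T] → ℝ^d be càdlàg and let [α, β) ⊂ [0,T] be a subinterval. Fix ε > 0 and suppose x has no jump of magnitude greater than ε in [α, β), i.e., |x(t) - x(t-)| ≤ ε for all t ∈ (α, β). Then for every δ > 0, sup{|x(t_1) - x(t_2)| : t_1, t_2 ∈ [α, β), |t_2 - t_1| ≤ δ} ≤ 2ω''_x(δ) + ε, where ω''_x(δ) := sup_{t_1 ≤ t ≤ t_2, t_2 - t_1 ≤ δ} min(|x(t) - x(t_1)|, |x(t_2) - x(t)|). -/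
open Set

/-- A function `x` is càdlàg on `[0,T]`: right-continuous on `[0,T)` and with left limits
on `(0,T]`. -/
def CadlagOn {E : Type*} [NormedAddCommGroup E] (x : ℝ → E) (T : ℝ) : Prop :=
  (∀ t ∈ Set.Ico (0:ℝ) T, ContinuousWithinAt x (Set.Ici t) t) ∧
  (∀ t ∈ Set.Ioc (0:ℝ) T, ∃ l : E, Filter.Tendsto x (nhdsWithin t (Set.Ico 0 t)) (nhds l))

/-- The modulus `ω''_x(δ)` on `[0,T]`. -/
noncomputable def cadlagMod'' {E : Type*} [NormedAddCommGroup E]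
    (x : ℝ → E) (T δ : ℝ) : ℝ :=
  sSup { b : ℝ | ∃ t₁ t t₂ : ℝ, 0 ≤ t₁ ∧ t₁ ≤ t ∧ t ≤ t₂ ∧ t₂ ≤ T ∧ t₂ - t₁ ≤ δ ∧
    b = min ‖x t - x t₁‖ ‖x t₂ - x t‖ }

open Filter Topology

/-- A càdlàg function is bounded on `[0,T]`. -/
lemma cadlag_bounded {E : Type*} [NormedAddCommGroup E] (x : ℝ → E) (T : ℝ)
    (hT : 0 ≤ T) (hx : CadlagOn x T) :
    ∃ M : ℝ, ∀ s ∈ Set.Icc (0:ℝ) T, ‖x s‖ ≤ M := by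
  have hK : IsCompact (Set.Icc (0:ℝ) T) := isCompact_Icc
  have := hK.induction_on (p := fun U => ∃ M : ℝ, ∀ u ∈ U, ‖x u‖ ≤ M)
    ⟨0, by simp⟩ ?_ ?_ ?_
  · obtain ⟨M, hM⟩ := this; exact ⟨M, hM⟩
  · rintro s t hst ⟨M, hM⟩; exact ⟨M, fun u hu => hM u (hst hu)⟩
  · rintro s t ⟨M, hM⟩ ⟨N, hN⟩
    exact ⟨max M N, fun u hu => hu.elim (fun h => (hM u h).trans (le_max_left _ _))
      (fun h => (hN u h).trans (le_max_right _ _))⟩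
  · intro t ht
    obtain ⟨ht0, htT⟩ := ht
    have hleft : ∃ C : ℝ, ∀ᶠ s in 𝓝[Set.Ico 0 t] t, ‖x s‖ ≤ C := by
      rcases eq_or_lt_of_le ht0 with h0 | h0
      · refine ⟨0, ?_⟩
        have : Set.Ico (0:ℝ) t = ∅ := by rw [← h0]; simp
        rw [this, nhdsWithin_empty]
        exact Filter.eventually_bot
      · obtain ⟨l, hl⟩ := hx.2 t ⟨h0, htT⟩
        refine ⟨‖l‖ + 1, ?_⟩
        have := hl.norm.eventually_lt_const (lt_add_one ‖l‖)
        exact this.mono fun s hs => hs.le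
    have hright : ∃ C : ℝ, ∀ᶠ s in 𝓝[Set.Ici t ∩ Set.Icc 0 T] t, ‖x s‖ ≤ C := by
      rcases eq_or_lt_of_le htT with hT' | hT'
      · refine ⟨‖x t‖, ?_⟩
        have hsub : Set.Ici t ∩ Set.Icc 0 T ⊆ {t} := by
          intro s hs
          have h1 : t ≤ s := hs.1
          have h2 : s ≤ T := hs.2.2
          have : s = t := le_antisymm (hT' ▸ h2) h1
          simp [this]
        filter_upwards [self_mem_nhdsWithin] with s hs
        have : s = t := hsub hs
        simp [this]
      · have hcont : ContinuousWithinAt x (Set.Ici t) t := hx.1 t ⟨ht0, hT'⟩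
        have hcont' : Filter.Tendsto x (𝓝[Set.Ici t ∩ Set.Icc 0 T] t) (𝓝 (x t)) :=
          hcont.mono_left (nhdsWithin_mono t Set.inter_subset_left)
        refine ⟨‖x t‖ + 1, ?_⟩
        have := hcont'.norm.eventually_lt_const (lt_add_one ‖x t‖)
        exact this.mono fun s hs => hs.le
    obtain ⟨C₁, hC₁⟩ := hleft
    obtain ⟨C₂, hC₂⟩ := hright
    have hsub : Set.Icc (0:ℝ) T ⊆ Set.Ico 0 t ∪ (Set.Ici t ∩ Set.Icc 0 T) := by
      intro s hs; rcases lt_or_ge s t with h | h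
      · exact Or.inl ⟨hs.1, h⟩
      · exact Or.inr ⟨h, hs⟩
    have hle : 𝓝[Set.Icc (0:ℝ) T] t ≤ 𝓝[Set.Ico 0 t] t ⊔ 𝓝[Set.Ici t ∩ Set.Icc 0 T] t := by
      rw [← nhdsWithin_union]; exact nhdsWithin_mono t hsub
    have hev : ∀ᶠ s in 𝓝[Set.Icc (0:ℝ) T] t, ‖x s‖ ≤ max C₁ C₂ := by
      exact hle (Filter.eventually_sup.mpr
        ⟨hC₁.mono fun s hs => hs.trans (le_max_left _ _),
         hC₂.mono fun s hs => hs.trans (le_max_right _ _)⟩)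
    exact ⟨_, hev, max C₁ C₂, fun u hu => hu⟩

lemma key_osc {E : Type*} [NormedAddCommGroup E]
    (x : ℝ → E) (T : ℝ) (hT : 0 < T) (hx : CadlagOn x T)
    (α β : ℝ) (hα : 0 ≤ α) (hβ : β ≤ T)
    (ε : ℝ) (hε : 0 < ε)
    (hjumps : ∀ t ∈ Set.Ioo α β, ∀ l : E,
      Filter.Tendsto x (nhdsWithin t (Set.Iio t)) (nhds l) → ‖x t - l‖ ≤ ε)
    (δ : ℝ) (hδ : 0 < δ)
    (t₁ : ℝ) (ht₁ : t₁ ∈ Set.Ico α β) (t₂ : ℝ) (ht₂ : t₂ ∈ Set.Ico α β)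
    (h12 : t₁ ≤ t₂) (hdel : t₂ - t₁ ≤ δ) :
    ‖x t₁ - x t₂‖ ≤ 2 * cadlagMod'' x T δ + ε := by
  set w := cadlagMod'' x T δ with hw
  obtain ⟨M, hM⟩ := cadlag_bounded x T hT.le hx
  have h0t₁ : 0 ≤ t₁ := hα.trans ht₁.1
  have ht₂T : t₂ ≤ T := (ht₂.2.trans_le hβ).le
  have hBdd : BddAbove { b : ℝ | ∃ s₁ s s₂ : ℝ, 0 ≤ s₁ ∧ s₁ ≤ s ∧ s ≤ s₂ ∧ s₂ ≤ T ∧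
      s₂ - s₁ ≤ δ ∧ b = min ‖x s - x s₁‖ ‖x s₂ - x s‖ } := by
    refine ⟨M + M, ?_⟩
    rintro b ⟨s₁, s, s₂, h1, h2, h3, h4, h5, rfl⟩
    calc min ‖x s - x s₁‖ ‖x s₂ - x s‖ ≤ ‖x s - x s₁‖ := min_le_left _ _
      _ ≤ ‖x s‖ + ‖x s₁‖ := norm_sub_le _ _
      _ ≤ M + M := add_le_add (hM s ⟨h1.trans h2, h3.trans h4⟩)
          (hM s₁ ⟨h1, (h2.trans h3).trans h4⟩)
  have hw0 : 0 ≤ w := by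
    rw [hw, cadlagMod'']
    apply le_csSup hBdd
    exact ⟨0, 0, 0, le_refl 0, le_refl 0, le_refl 0, hT.le, by simpa using hδ.le, by simp⟩
  have hdich : ∀ s, t₁ ≤ s → s ≤ t₂ → min ‖x s - x t₁‖ ‖x t₂ - x s‖ ≤ w := by
    intro s hs1 hs2
    rw [hw, cadlagMod'']
    exact le_csSup hBdd ⟨t₁, s, t₂, h0t₁, hs1, hs2, ht₂T, hdel, rfl⟩
  set S := {s : ℝ | s ∈ Set.Icc t₁ t₂ ∧ ‖x s - x t₁‖ ≤ w} with hS
  have ht₁S : t₁ ∈ S := ⟨⟨le_refl _, h12⟩, by simpa using hw0⟩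
  have hSne : S.Nonempty := ⟨t₁, ht₁S⟩
  have hSbdd : BddAbove S := ⟨t₂, fun s hs => hs.1.2⟩
  set u := sSup S with hu
  have hu1 : t₁ ≤ u := le_csSup hSbdd ht₁S
  have hu2 : u ≤ t₂ := csSup_le hSne fun s hs => hs.1.2
  -- Claim A : ‖x t₂ - x u‖ ≤ w
  have hA : ‖x t₂ - x u‖ ≤ w := by
    by_cases huS : u ∈ S
    · rcases eq_or_lt_of_le hu2 with he | hlt
      · rw [he]; simpa using hw0
      · have hcont : ContinuousWithinAt x (Set.Ici u) u :=
          hx.1 u ⟨h0t₁.trans hu1, lt_of_lt_of_le hlt ht₂T⟩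
        have htend : Filter.Tendsto (fun s => ‖x t₂ - x s‖) (𝓝[>] u) (𝓝 ‖x t₂ - x u‖) :=
          (Filter.Tendsto.const_sub _ (hcont.mono_left (nhdsWithin_mono u Set.Ioi_subset_Ici_self))).norm
        have hev : ∀ᶠ s in 𝓝[>] u, ‖x t₂ - x s‖ ≤ w := by
          filter_upwards [Ioo_mem_nhdsGT_of_mem ⟨le_refl u, hlt⟩] with s hs
          have hsnot : s ∉ S := fun h => absurd (le_csSup hSbdd h) (not_le.mpr hs.1)
          have := hdich s (hu1.trans hs.1.le) hs.2.le
          rcases min_le_iff.mp this with h | h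
          · exact absurd ⟨⟨hu1.trans hs.1.le, hs.2.le⟩, h⟩ hsnot
          · exact h
        exact le_of_tendsto htend hev
    · have := hdich u hu1 hu2
      rcases min_le_iff.mp this with h | h
      · exact absurd ⟨⟨hu1, hu2⟩, h⟩ huS
      · exact h
  -- Claim B : ‖x u - x t₁‖ ≤ w + ε
  have hB2 : ‖x u - x t₁‖ ≤ w + ε := by
    by_cases huS : u ∈ S
    · exact huS.2.trans (le_add_of_nonneg_right hε.le)
    · have hlt : t₁ < u := lt_of_le_of_ne hu1 (fun h => huS (h ▸ ht₁S))
      have h0u : 0 < u := h0t₁.trans_lt hlt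
      obtain ⟨l, hl⟩ := hx.2 u ⟨h0u, hu2.trans ht₂T⟩
      have hcl : u ∈ closure S := (isLUB_csSup hSne hSbdd).mem_closure hSne
      have hne : (𝓝[S] u).NeBot := mem_closure_iff_nhdsWithin_neBot.mp hcl
      have hSsub : S ⊆ Set.Ico 0 u := by
        intro s hs
        refine ⟨h0t₁.trans hs.1.1, lt_of_le_of_ne (le_csSup hSbdd hs) ?_⟩
        rintro rfl; exact huS hs
      have hlS : Filter.Tendsto x (𝓝[S] u) (𝓝 l) :=
        hl.mono_left (nhdsWithin_mono u hSsub)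
      have hlw : ‖l - x t₁‖ ≤ w := by
        have htend : Filter.Tendsto (fun s => ‖x s - x t₁‖) (𝓝[S] u) (𝓝 ‖l - x t₁‖) :=
          (hlS.sub_const _).norm
        exact le_of_tendsto htend (eventually_mem_nhdsWithin.mono fun s hs => hs.2)
      have hleft : Filter.Tendsto x (𝓝[Set.Iio u] u) (𝓝 l) := by
        refine hl.mono_left (nhdsWithin_le_iff.mpr ?_)
        have : Set.Ici (0:ℝ) ∩ Set.Iio u ∈ 𝓝[Set.Iio u] u :=
          Filter.inter_mem (mem_nhdsWithin_of_mem_nhds (Ici_mem_nhds h0u)) self_mem_nhdsWithin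
        rwa [Set.Ici_inter_Iio] at this
      have hjump : ‖x u - l‖ ≤ ε :=
        hjumps u ⟨ht₁.1.trans_lt hlt, lt_of_le_of_lt hu2 ht₂.2⟩ l hleft
      calc ‖x u - x t₁‖ ≤ ‖x u - l‖ + ‖l - x t₁‖ := norm_sub_le_norm_sub_add_norm_sub _ _ _
        _ ≤ ε + w := add_le_add hjump hlw
        _ = w + ε := by ring
  calc ‖x t₁ - x t₂‖ ≤ ‖x t₁ - x u‖ + ‖x u - x t₂‖ := norm_sub_le_norm_sub_add_norm_sub _ _ _
    _ = ‖x u - x t₁‖ + ‖x t₂ - x u‖ := by rw [norm_sub_rev (x t₁) (x u), norm_sub_rev (x u) (x t₂)]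
    _ ≤ (w + ε) + w := add_le_add hB2 hA
    _ = 2 * w + ε := by ring

theorem oscillation_bound_of_small_jumps {d : ℕ}
    (x : ℝ → EuclideanSpace ℝ (Fin d)) (T : ℝ) (hT : 0 < T) (hx : CadlagOn x T)
    (α β : ℝ) (hα : 0 ≤ α) (hαβ : α ≤ β) (hβ : β ≤ T)
    (ε : ℝ) (hε : 0 < ε)
    -- x has no jump of magnitude greater than ε in [α, β):
    -- every left limit of x at a point of (α, β) is within ε of the value of x there
    (hjumps : ∀ t ∈ Set.Ioo α β, ∀ l : EuclideanSpace ℝ (Fin d),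
      Filter.Tendsto x (nhdsWithin t (Set.Iio t)) (nhds l) → ‖x t - l‖ ≤ ε)
    (δ : ℝ) (hδ : 0 < δ) :
    ∀ t₁ ∈ Set.Ico α β, ∀ t₂ ∈ Set.Ico α β, |t₂ - t₁| ≤ δ →
      ‖x t₁ - x t₂‖ ≤ 2 * cadlagMod'' x T δ + ε := by
  intro t₁ ht₁ t₂ ht₂ habs
  rcases le_total t₁ t₂ with h | h
  · exact key_osc x T hT hx α β hα hβ ε hε hjumps δ hδ t₁ ht₁ t₂ ht₂ h
      ((le_abs_self _).trans habs)
  · rw [norm_sub_rev]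
    have habs' : t₁ - t₂ ≤ δ := (le_abs_self _).trans (by rwa [abs_sub_comm] at habs)
    exact key_osc x T hT hx α β hα hβ ε hε hjumps δ hδ t₂ ht₂ t₁ ht₁ h habs'
end

section
/- For each δ > 0, the map x ↦ ω'_x(δ) is upper semicontinuous on the Skorohod space D([0,T], ℝ^d) with the Skorohod topology, where ω'_x(δ) is the càdlàg modulus inf_π max_i sup_{s,t ∈ [t_{i-1}, t_i)} |x(s) - x(t)| over partitions with mesh bounded below by δ. -/
open Set Filter

/-- The càdlàg modulus `ω'_x(δ)` on `[0,T]`. -/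
noncomputable def cadlagMod' {E : Type*} [NormedAddCommGroup E]
    (x : ℝ → E) (T δ : ℝ) : ℝ :=
  sInf { a : ℝ | ∃ (r : ℕ) (tt : ℕ → ℝ), 0 < r ∧ tt 0 = 0 ∧ tt r = T ∧
    (∀ i < r, δ < tt (i + 1) - tt i) ∧
    a = sSup { b : ℝ | ∃ i < r, ∃ s u : ℝ, s ∈ Set.Ico (tt i) (tt (i + 1)) ∧
          u ∈ Set.Ico (tt i) (tt (i + 1)) ∧ b = ‖x s - x u‖ } }

/-- The Skorohod distance between two functions on `[0,T]`: the infimum over increasing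
bijective time changes `λ` of `[0,T]` of `max(‖λ - Id‖_∞, ‖x - y∘λ‖_∞)`. -/
noncomputable def skorohodDist {E : Type*} [NormedAddCommGroup E]
    (T : ℝ) (x y : ℝ → E) : ℝ :=
  sInf { a : ℝ | 0 ≤ a ∧ ∃ l : ℝ → ℝ, l 0 = 0 ∧ l T = T ∧
    StrictMonoOn l (Set.Icc 0 T) ∧ ContinuousOn l (Set.Icc 0 T) ∧
    ∀ t ∈ Set.Icc (0:ℝ) T, |l t - t| ≤ a ∧ ‖x t - y (l t)‖ ≤ a }

lemma bounded_of_cadlagOn {E : Type*} [NormedAddCommGroup E] {y : ℝ → E} {T : ℝ}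
    (hy : CadlagOn y T) : ∃ M, ∀ t ∈ Set.Icc (0:ℝ) T, ‖y t‖ ≤ M := by
  rcases lt_or_ge T 0 with hT | hT
  · exact ⟨0, fun t ht => absurd (ht.1.trans ht.2) (not_le.2 hT)⟩
  have hK : IsCompact (Set.Icc (0:ℝ) T) := isCompact_Icc
  have := hK.induction_on (p := fun s => ∃ M, ∀ t ∈ s, ‖y t‖ ≤ M)
    ⟨0, fun t ht => absurd ht (Set.notMem_empty t)⟩
    (fun s t hst ⟨M, hM⟩ => ⟨M, fun u hu => hM u (hst hu)⟩)
    (fun s t ⟨M, hM⟩ ⟨N, hN⟩ => ⟨max M N, fun u hu => hu.elim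
      (fun h => (hM u h).trans (le_max_left _ _))
      (fun h => (hN u h).trans (le_max_right _ _))⟩)
    ?_
  · exact this
  intro t ht
  -- left piece
  have hleft : ∃ s1 ∈ nhdsWithin t (Set.Ico 0 t), ∃ M, ∀ u ∈ s1, ‖y u‖ ≤ M := by
    rcases eq_or_lt_of_le ht.1 with h0 | h0
    · refine ⟨∅, ?_, 0, fun u hu => absurd hu (Set.notMem_empty u)⟩
      rw [← h0]
      simp [nhdsWithin, Set.Ico_self]
    · obtain ⟨L, hL⟩ := hy.2 t ⟨h0, ht.2⟩
      have hball : Metric.closedBall L 1 ∈ nhds L := Metric.closedBall_mem_nhds L one_pos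
      refine ⟨y ⁻¹' Metric.closedBall L 1, hL hball, ‖L‖ + 1, fun u hu => ?_⟩
      have : dist (y u) L ≤ 1 := hu
      calc ‖y u‖ = ‖L + (y u - L)‖ := by congr 1; abel
        _ ≤ ‖L‖ + ‖y u - L‖ := norm_add_le _ _
        _ ≤ ‖L‖ + 1 := by rw [← dist_eq_norm] at *; linarith
  -- right piece
  have hright : ∃ s2 ∈ nhdsWithin t (Set.Ici t ∩ Set.Icc 0 T), ∃ M, ∀ u ∈ s2, ‖y u‖ ≤ M := by
    rcases eq_or_lt_of_le ht.2 with hTt | hTt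
    · refine ⟨{t}, ?_, ‖y t‖, fun u hu => by rw [Set.mem_singleton_iff.mp hu]⟩
      have : Set.Ici t ∩ Set.Icc 0 T ⊆ {t} := by
        intro u hu
        have := le_antisymm (hTt ▸ hu.2.2) hu.1
        simp [this]
      exact Filter.mem_of_superset self_mem_nhdsWithin this
    · have hc := hy.1 t ⟨ht.1, hTt⟩
      have hball : Metric.closedBall (y t) 1 ∈ nhds (y t) := Metric.closedBall_mem_nhds _ one_pos
      have := hc hball
      refine ⟨y ⁻¹' Metric.closedBall (y t) 1, ?_, ‖y t‖ + 1, fun u hu => ?_⟩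
      · exact nhdsWithin_mono t Set.inter_subset_left this
      · have : dist (y u) (y t) ≤ 1 := hu
        calc ‖y u‖ = ‖y t + (y u - y t)‖ := by congr 1; abel
          _ ≤ ‖y t‖ + ‖y u - y t‖ := norm_add_le _ _
          _ ≤ ‖y t‖ + 1 := by rw [← dist_eq_norm] at *; linarith
  obtain ⟨s1, hs1, M1, hM1⟩ := hleft
  obtain ⟨s2, hs2, M2, hM2⟩ := hright
  refine ⟨s1 ∪ s2, ?_, max M1 M2, fun u hu => hu.elim
    (fun h => (hM1 u h).trans (le_max_left _ _))
    (fun h => (hM2 u h).trans (le_max_right _ _))⟩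
  have hsub : Set.Icc (0:ℝ) T ⊆ Set.Ico 0 t ∪ (Set.Ici t ∩ Set.Icc 0 T) := by
    intro u hu
    rcases lt_or_ge u t with h | h
    · exact Or.inl ⟨hu.1, h⟩
    · exact Or.inr ⟨h, hu⟩
  have : nhdsWithin t (Set.Icc 0 T) ≤ nhdsWithin t (Set.Ico 0 t ∪ (Set.Ici t ∩ Set.Icc 0 T)) :=
    nhdsWithin_mono t hsub
  apply this
  rw [nhdsWithin_union]
  exact Filter.mem_sup.mpr ⟨Filter.mem_of_superset hs1 Set.subset_union_left,
    Filter.mem_of_superset hs2 Set.subset_union_right⟩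

lemma mem_nonneg {E : Type*} [NormedAddCommGroup E] {y : ℝ → E} {T δ a : ℝ} (hδ : 0 < δ)
    (ha : ∃ (r : ℕ) (tt : ℕ → ℝ), 0 < r ∧ tt 0 = 0 ∧ tt r = T ∧
      (∀ i < r, δ < tt (i + 1) - tt i) ∧
      a = sSup { b : ℝ | ∃ i < r, ∃ s u : ℝ, s ∈ Set.Ico (tt i) (tt (i + 1)) ∧
            u ∈ Set.Ico (tt i) (tt (i + 1)) ∧ b = ‖y s - y u‖ }) : 0 ≤ a := by
  obtain ⟨r, tt, hr, h0, hT, hgap, rfl⟩ := ha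
  apply Real.sSup_nonneg'
  refine ⟨0, ⟨0, hr, tt 0, tt 0, ?_, ?_, by simp⟩, le_rfl⟩ <;>
    exact ⟨le_rfl, by have := hgap 0 hr; linarith⟩

lemma tt_mono {tt : ℕ → ℝ} {r : ℕ} {δ : ℝ} (hδ : 0 < δ)
    (hgap : ∀ i < r, δ < tt (i + 1) - tt i) :
    ∀ i j, i ≤ j → j ≤ r → tt i ≤ tt j := by
  intro i j hij hjr
  induction j with
  | zero => simp only [Nat.le_zero] at hij; rw [hij]
  | succ n ih =>
    rcases Nat.eq_or_lt_of_le hij with h | h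
    · rw [h]
    · have h1 : tt i ≤ tt n := ih (Nat.lt_succ_iff.mp h) (le_of_lt (Nat.lt_of_succ_le hjr))
      have := hgap n (Nat.lt_of_succ_le hjr)
      linarith

lemma key_estimate {E : Type*} [NormedAddCommGroup E]
    (x y : ℝ → E) {T δ : ℝ} (hT : 0 < T) (hδ : 0 < δ)
    {r : ℕ} {tt : ℕ → ℝ} (hr : 0 < r) (htt0 : tt 0 = 0) (httr : tt r = T)
    {η : ℝ} (hη : 0 < η) (hgap : ∀ i < r, δ + η ≤ tt (i + 1) - tt i)
    {Mx : ℝ} (hMx : ∀ t ∈ Set.Icc (0:ℝ) T, ‖x t‖ ≤ Mx)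
    {e : ℝ} (he0 : 0 ≤ e) (he : 2 * e < η)
    {l : ℝ → ℝ} (hl0 : l 0 = 0) (hlT : l T = T)
    (hmono : StrictMonoOn l (Set.Icc 0 T)) (hcont : ContinuousOn l (Set.Icc 0 T))
    (hl : ∀ t ∈ Set.Icc (0:ℝ) T, |l t - t| ≤ e ∧ ‖y t - x (l t)‖ ≤ e) :
    cadlagMod' y T δ ≤
      sSup { b : ℝ | ∃ i < r, ∃ s u : ℝ, s ∈ Set.Ico (tt i) (tt (i + 1)) ∧
            u ∈ Set.Ico (tt i) (tt (i + 1)) ∧ b = ‖x s - x u‖ } + 2 * e := by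
  have hgap' : ∀ i < r, δ < tt (i + 1) - tt i := fun i hi => by
    have := hgap i hi; linarith
  have ttmono := tt_mono hδ hgap'
  have htmem : ∀ i ≤ r, tt i ∈ Set.Icc (0:ℝ) T := fun i hi =>
    ⟨htt0 ▸ ttmono 0 i (Nat.zero_le _) hi, httr ▸ ttmono i r hi le_rfl⟩
  have himg := intermediate_value_Icc hT.le hcont
  rw [hl0, hlT] at himg
  have hsurj : ∀ i : ℕ, ∃ s, s ∈ Set.Icc (0:ℝ) T ∧ l s = tt (min i r) := by
    intro i
    obtain ⟨s, hs, hls⟩ := himg (htmem (min i r) (min_le_right _ _))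
    exact ⟨s, hs, hls⟩
  set ss : ℕ → ℝ := fun i => (hsurj i).choose with hss_def
  have hss : ∀ i ≤ r, ss i ∈ Set.Icc (0:ℝ) T ∧ l (ss i) = tt i := by
    intro i hi
    have h := (hsurj i).choose_spec
    exact ⟨h.1, h.2.trans (by rw [min_eq_left hi])⟩
  have hinj := hmono.injOn
  have hss0 : ss 0 = 0 := by
    apply hinj (hss 0 (Nat.zero_le _)).1 ⟨le_rfl, hT.le⟩
    rw [(hss 0 (Nat.zero_le _)).2, htt0, hl0]
  have hssr : ss r = T := by
    apply hinj (hss r le_rfl).1 ⟨hT.le, le_rfl⟩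
    rw [(hss r le_rfl).2, httr, hlT]
  have hnear : ∀ i ≤ r, |tt i - ss i| ≤ e := by
    intro i hi
    have h1 := (hl (ss i) (hss i hi).1).1
    rwa [(hss i hi).2] at h1
  have hssgap : ∀ i < r, δ < ss (i + 1) - ss i := by
    intro i hi
    have h1 := abs_le.mp (hnear i hi.le)
    have h2 := abs_le.mp (hnear (i + 1) hi)
    have := hgap i hi
    linarith [h1.1, h1.2, h2.1, h2.2]
  set Bx := { b : ℝ | ∃ i < r, ∃ s u : ℝ, s ∈ Set.Ico (tt i) (tt (i + 1)) ∧
      u ∈ Set.Ico (tt i) (tt (i + 1)) ∧ b = ‖x s - x u‖ } with hBx_def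
  have hmemIcc : ∀ i < r, ∀ s ∈ Set.Ico (tt i) (tt (i + 1)), s ∈ Set.Icc (0:ℝ) T := by
    intro i hi s hs
    exact ⟨(htmem i hi.le).1.trans hs.1, hs.2.le.trans (htmem (i + 1) hi).2⟩
  have hBxbdd : BddAbove Bx := by
    refine ⟨2 * Mx, fun b hb => ?_⟩
    obtain ⟨i, hi, s, u, hs, hu, rfl⟩ := hb
    have h1 := hMx s (hmemIcc i hi s hs)
    have h2 := hMx u (hmemIcc i hi u hu)
    calc ‖x s - x u‖ ≤ ‖x s‖ + ‖x u‖ := norm_sub_le _ _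
      _ ≤ 2 * Mx := by linarith
  have hA0 : 0 ≤ sSup Bx := by
    apply Real.sSup_nonneg'
    refine ⟨0, ⟨0, hr, tt 0, tt 0, ?_, ?_, by simp⟩, le_rfl⟩ <;>
      exact ⟨le_rfl, by have := hgap 0 hr; linarith⟩
  have hby : ∀ b ∈ { b : ℝ | ∃ i < r, ∃ s u : ℝ, s ∈ Set.Ico (ss i) (ss (i + 1)) ∧
      u ∈ Set.Ico (ss i) (ss (i + 1)) ∧ b = ‖y s - y u‖ }, b ≤ sSup Bx + 2 * e := by
    rintro b ⟨i, hi, s, u, hs, hu, rfl⟩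
    have hsIcc : s ∈ Set.Icc (0:ℝ) T :=
      ⟨(hss i hi.le).1.1.trans hs.1, hs.2.le.trans (hss (i + 1) hi).1.2⟩
    have huIcc : u ∈ Set.Icc (0:ℝ) T :=
      ⟨(hss i hi.le).1.1.trans hu.1, hu.2.le.trans (hss (i + 1) hi).1.2⟩
    have hls : l s ∈ Set.Ico (tt i) (tt (i + 1)) := by
      constructor
      · rw [← (hss i hi.le).2]
        exact hmono.monotoneOn (hss i hi.le).1 hsIcc hs.1
      · rw [← (hss (i + 1) hi).2]
        exact hmono hsIcc (hss (i + 1) hi).1 hs.2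
    have hlu : l u ∈ Set.Ico (tt i) (tt (i + 1)) := by
      constructor
      · rw [← (hss i hi.le).2]
        exact hmono.monotoneOn (hss i hi.le).1 huIcc hu.1
      · rw [← (hss (i + 1) hi).2]
        exact hmono huIcc (hss (i + 1) hi).1 hu.2
    have hmemBx : ‖x (l s) - x (l u)‖ ∈ Bx := ⟨i, hi, l s, l u, hls, hlu, rfl⟩
    have h1 := le_csSup hBxbdd hmemBx
    have h2 := (hl s hsIcc).2
    have h3 := (hl u huIcc).2
    calc ‖y s - y u‖ = ‖(y s - x (l s)) + (x (l s) - x (l u)) + (x (l u) - y u)‖ := by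
          congr 1; abel
      _ ≤ ‖(y s - x (l s)) + (x (l s) - x (l u))‖ + ‖x (l u) - y u‖ := norm_add_le _ _
      _ ≤ ‖y s - x (l s)‖ + ‖x (l s) - x (l u)‖ + ‖x (l u) - y u‖ := by
          linarith [norm_add_le (y s - x (l s)) (x (l s) - x (l u))]
      _ ≤ sSup Bx + 2 * e := by
          rw [norm_sub_rev (x (l u))] at *
          linarith
  have hstep : cadlagMod' y T δ ≤ sSup { b : ℝ | ∃ i < r, ∃ s u : ℝ,
      s ∈ Set.Ico (ss i) (ss (i + 1)) ∧ u ∈ Set.Ico (ss i) (ss (i + 1)) ∧ b = ‖y s - y u‖ } := by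
    apply csInf_le ⟨0, fun a ha => mem_nonneg hδ ha⟩
    exact ⟨r, ss, hr, hss0, hssr, hssgap, rfl⟩
  exact hstep.trans (Real.sSup_le hby (by linarith))

lemma cadlagMod'_nonneg {E : Type*} [NormedAddCommGroup E] (y : ℝ → E) (T δ : ℝ) (hδ : 0 < δ) :
    0 ≤ cadlagMod' y T δ :=
  Real.sInf_nonneg fun _ ha => mem_nonneg hδ ha

/-- For each `δ > 0`, the càdlàg modulus `x ↦ ω'_x(δ)` is upper semicontinuous with respect
to the Skorohod topology (stated sequentially, which is equivalent on metric spaces). -/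
theorem cadlagMod'_upperSemicontinuous {d : ℕ}
    (T : ℝ) (hT : 0 < T) (δ : ℝ) (hδ : 0 < δ)
    (x : ℝ → EuclideanSpace ℝ (Fin d)) (hx : CadlagOn x T)
    (xk : ℕ → ℝ → EuclideanSpace ℝ (Fin d)) (hxk : ∀ k, CadlagOn (xk k) T)
    (hconv : Tendsto (fun k => skorohodDist T (xk k) x) atTop (nhds 0)) :
    Filter.limsup (fun k => cadlagMod' (xk k) T δ) atTop ≤ cadlagMod' x T δ := by
  by_cases hpart : ∃ (r : ℕ) (tt : ℕ → ℝ), 0 < r ∧ tt 0 = 0 ∧ tt r = T ∧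
      ∀ i < r, δ < tt (i + 1) - tt i
  swap
  · have h0 : ∀ y : ℝ → EuclideanSpace ℝ (Fin d), cadlagMod' y T δ = 0 := by
      intro y
      unfold cadlagMod'
      have hemp : { a : ℝ | ∃ (r : ℕ) (tt : ℕ → ℝ), 0 < r ∧ tt 0 = 0 ∧ tt r = T ∧
          (∀ i < r, δ < tt (i + 1) - tt i) ∧
          a = sSup { b : ℝ | ∃ i < r, ∃ s u : ℝ, s ∈ Set.Ico (tt i) (tt (i + 1)) ∧
                u ∈ Set.Ico (tt i) (tt (i + 1)) ∧ b = ‖y s - y u‖ } } = (∅ : Set ℝ) := by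
        ext a
        simp only [Set.mem_setOf_eq, Set.mem_empty_iff_false, iff_false]
        rintro ⟨r, tt, hr, h1, h2, h3, -⟩
        exact hpart ⟨r, tt, hr, h1, h2, h3⟩
      rw [hemp, Real.sInf_empty]
    have heq : (fun k => cadlagMod' (xk k) T δ) = fun _ => (0:ℝ) := funext fun k => h0 _
    rw [heq, Filter.limsup_const, h0 x]
  · obtain ⟨Mx, hMx⟩ := bounded_of_cadlagOn hx
    apply le_of_forall_pos_le_add
    intro ε hε
    have hXne : Set.Nonempty { a : ℝ | ∃ (r : ℕ) (tt : ℕ → ℝ), 0 < r ∧ tt 0 = 0 ∧ tt r = T ∧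
        (∀ i < r, δ < tt (i + 1) - tt i) ∧
        a = sSup { b : ℝ | ∃ i < r, ∃ s u : ℝ, s ∈ Set.Ico (tt i) (tt (i + 1)) ∧
              u ∈ Set.Ico (tt i) (tt (i + 1)) ∧ b = ‖x s - x u‖ } } := by
      obtain ⟨r0, tt0, hr0, h00, h0T, h0gap⟩ := hpart
      exact ⟨_, r0, tt0, hr0, h00, h0T, h0gap, rfl⟩
    have hc : cadlagMod' x T δ < cadlagMod' x T δ + ε / 2 := by linarith
    obtain ⟨a, haS, ha⟩ := exists_lt_of_csInf_lt hXne hc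
    obtain ⟨r, tt, hr, htt0, httr, hgap, haeq⟩ := haS
    have hrange : (Finset.range r).Nonempty := Finset.nonempty_range_iff.mpr (by omega : r ≠ 0)
    set η : ℝ := (Finset.range r).inf' hrange (fun i => tt (i + 1) - tt i - δ) with hη_def
    have hη : 0 < η := by
      rw [hη_def, Finset.lt_inf'_iff]
      intro i hi
      have := hgap i (Finset.mem_range.mp hi)
      linarith
    have hgapη : ∀ i < r, δ + η ≤ tt (i + 1) - tt i := by
      intro i hi
      have := Finset.inf'_le (fun i => tt (i + 1) - tt i - δ) (Finset.mem_range.mpr hi)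
      rw [← hη_def] at this
      linarith
    set ε0 : ℝ := min (η / 3) (ε / 8) with hε0_def
    have hε0 : 0 < ε0 := lt_min (by linarith) (by linarith)
    have hev : ∀ᶠ k in atTop, skorohodDist T (xk k) x < ε0 := by
      have h1 := Metric.tendsto_nhds.mp hconv ε0 hε0
      filter_upwards [h1] with k hk
      rw [Real.dist_0_eq_abs] at hk
      exact lt_of_abs_lt hk
    have hkey : ∀ᶠ k in atTop, cadlagMod' (xk k) T δ ≤ cadlagMod' x T δ + ε := by
      filter_upwards [hev] with k hk
      obtain ⟨Mk, hMk⟩ := bounded_of_cadlagOn (hxk k)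
      have hSne : Set.Nonempty { b : ℝ | 0 ≤ b ∧ ∃ l : ℝ → ℝ, l 0 = 0 ∧ l T = T ∧
          StrictMonoOn l (Set.Icc 0 T) ∧ ContinuousOn l (Set.Icc 0 T) ∧
          ∀ t ∈ Set.Icc (0:ℝ) T, |l t - t| ≤ b ∧ ‖xk k t - x (l t)‖ ≤ b } := by
        refine ⟨max 0 (Mk + Mx), le_max_left _ _, id, rfl, rfl, fun s _ t _ h => h,
          continuousOn_id, fun t ht => ⟨by simp, ?_⟩⟩
        have h1 := hMk t ht
        have h2 := hMx t ht
        calc ‖xk k t - x (id t)‖ ≤ ‖xk k t‖ + ‖x t‖ := norm_sub_le _ _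
          _ ≤ Mk + Mx := by linarith
          _ ≤ max 0 (Mk + Mx) := le_max_right _ _
      obtain ⟨ak, ⟨hak0, ll, hll0, hllT, hllmono, hllcont, hllprop⟩, hak⟩ :=
        exists_lt_of_csInf_lt hSne hk
      have hak2 : 2 * ak < η := by
        have : ε0 ≤ η / 3 := min_le_left _ _
        linarith
      have hkey2 := key_estimate x (xk k) hT hδ hr htt0 httr hη hgapη hMx hak0 hak2
        hll0 hllT hllmono hllcont hllprop
      rw [← haeq] at hkey2
      have hak3 : ak ≤ ε / 8 := le_of_lt (hak.trans_le (min_le_right _ _))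
      linarith
    refine limsup_le_of_le ?_ hkey
    exact isCoboundedUnder_le_of_le atTop (x := 0) fun k => cadlagMod'_nonneg _ _ _ hδ
end
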